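/- arXiv:2409.01897 — 4 statements merged into one kernel-verified Lean document; each statement's English description precedes it below -/
import Mathlib

section
/- Let a > 0 and let D^a be the space of continuous functions f : (-1,1) → ℝ such that (1-s²)^a f(s) → 0 as s → ±1 and the limits lim_{s→±1} ∫₀^s (1-t²)^{a-1} f(t) dt exist and are finite, equipped with the norm ‖f‖ = sup_{s∈(-1,1)} (1-s²)^a |f(s)| + sup_{s∈(-1,1)} |∫₀^s (1-t²)^{a-1} f(t) dt|. Then D^a is complete with respect to this norm. -/
open Filter Topology MeasureTheory

noncomputable def DaInt (a : ℝ) (f : ℝ → ℝ) (s : ℝ) : ℝ :=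
  ∫ t in (0:ℝ)..s, (1 - t ^ 2) ^ (a - 1) * f t

noncomputable def DaLim (a : ℝ) (f : ℝ → ℝ) (e : ℝ) : ℝ :=
  limUnder (𝓝[Set.Ioo (-1:ℝ) 1] e) (DaInt a f)

def MemDa (a : ℝ) (f : ℝ → ℝ) : Prop :=
  ContinuousOn f (Set.Ioo (-1:ℝ) 1) ∧
  Tendsto (fun s => (1 - s ^ 2) ^ a * f s) (𝓝[Set.Ioo (-1:ℝ) 1] 1) (𝓝 0) ∧
  Tendsto (fun s => (1 - s ^ 2) ^ a * f s) (𝓝[Set.Ioo (-1:ℝ) 1] (-1)) (𝓝 0) ∧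
  (∃ L : ℝ, Tendsto (DaInt a f) (𝓝[Set.Ioo (-1:ℝ) 1] 1) (𝓝 L)) ∧
  (∃ L : ℝ, Tendsto (DaInt a f) (𝓝[Set.Ioo (-1:ℝ) 1] (-1)) (𝓝 L))

noncomputable def DaNorm (a : ℝ) (f : ℝ → ℝ) : ℝ :=
  (⨆ s : Set.Ioo (-1:ℝ) 1, (1 - (s:ℝ) ^ 2) ^ a * |f (s:ℝ)|) +
    ⨆ s : Set.Ioo (-1:ℝ) 1, |DaInt a f (s:ℝ)|

/-- The (possibly improper) integral `∫_0^s f(t)(1-t^2)^(a-1) dt`, where for `s = ±1`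
it is interpreted as the improper limit. -/
noncomputable def DaIntE (a : ℝ) (f : ℝ → ℝ) (s : ℝ) : ℝ :=
  if s ∈ Set.Ioo (-1:ℝ) 1 then DaInt a f s else DaLim a f s

/-- `I_a(f)(s) = sign s * (s⁻¹ (1-s²)^a f(s) + 2a ∫_{-sign s}^s f(t)(1-t²)^(a-1) dt)`. -/
noncomputable def Ia (a : ℝ) (f : ℝ → ℝ) (s : ℝ) : ℝ :=
  Real.sign s *
    (s⁻¹ * (1 - s ^ 2) ^ a * f s + 2 * a * (DaIntE a f s - DaIntE a f (-Real.sign s)))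

/-- `J_a(u)(s) = -|s|u(1)/2 + |s|(1-s²)^{-a}u(s) - 2a|s| ∫_0^s t(1-t²)^{-(a+1)}u(t) dt`
for `s ≠ 0`, and `J_a(u)(0) = lim_{t→0} |t|u(t)`. -/
noncomputable def Ja (a : ℝ) (u : ℝ → ℝ) (s : ℝ) : ℝ :=
  if s = 0 then limUnder (𝓝[≠] (0:ℝ)) (fun t => |t| * u t)
  else |s| * (-u 1 / 2) + |s| * (1 - s ^ 2) ^ (-a) * u s -
    2 * a * |s| * ∫ t in (0:ℝ)..s, t * (1 - t ^ 2) ^ (-(a + 1)) * u t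

def MemC (u : ℝ → ℝ) : Prop :=
  ContinuousOn u (Set.Icc (-1:ℝ) 1 \ {0}) ∧ u 1 = u (-1) ∧
  ∃ L : ℝ, Tendsto (fun s => |s| * u s) (𝓝[Set.Icc (-1:ℝ) 1 \ {0}] 0) (𝓝 L)

noncomputable def CNorm (u : ℝ → ℝ) : ℝ :=
  ⨆ s : (Set.Icc (-1:ℝ) 1 \ {0} : Set ℝ), |(s:ℝ)| * |u (s:ℝ)|

section DaCompleteAux

open Set in
lemma Da_zero_mem_Ioo : (0:ℝ) ∈ Set.Ioo (-1:ℝ) 1 := by norm_num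

lemma Da_weight_pos {s : ℝ} (hs : s ∈ Set.Ioo (-1:ℝ) 1) : 0 < 1 - s ^ 2 := by
  nlinarith [hs.1, hs.2]

lemma Da_uIcc_subset_Ioo {s : ℝ} (hs : s ∈ Set.Ioo (-1:ℝ) 1) :
    Set.uIcc 0 s ⊆ Set.Ioo (-1:ℝ) 1 :=
  Set.ordConnected_Ioo.uIcc_subset Da_zero_mem_Ioo hs

lemma Da_contOn_weight {a : ℝ} {K : Set ℝ} (hK : K ⊆ Set.Ioo (-1:ℝ) 1) :
    ContinuousOn (fun t : ℝ => (1 - t ^ 2) ^ a) K := by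
  apply ContinuousOn.rpow_const
  · exact (continuous_const.sub (continuous_pow 2)).continuousOn
  · intro x hx; exact Or.inl (ne_of_gt (Da_weight_pos (hK hx)))

lemma Da_integrand_contOn {a : ℝ} {f : ℝ → ℝ} (hf : ContinuousOn f (Set.Ioo (-1:ℝ) 1))
    {K : Set ℝ} (hK : K ⊆ Set.Ioo (-1:ℝ) 1) :
    ContinuousOn (fun t : ℝ => (1 - t ^ 2) ^ (a - 1) * f t) K :=
  (Da_contOn_weight hK).mul (hf.mono hK)

lemma Da_integrand_integrable {a : ℝ} {f : ℝ → ℝ} (hf : ContinuousOn f (Set.Ioo (-1:ℝ) 1))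
    {s : ℝ} (hs : s ∈ Set.Ioo (-1:ℝ) 1) :
    IntervalIntegrable (fun t : ℝ => (1 - t ^ 2) ^ (a - 1) * f t) volume 0 s :=
  (Da_integrand_contOn hf (Da_uIcc_subset_Ioo hs)).intervalIntegrable

lemma DaInt_sub {a : ℝ} {f g : ℝ → ℝ} (hf : ContinuousOn f (Set.Ioo (-1:ℝ) 1))
    (hg : ContinuousOn g (Set.Ioo (-1:ℝ) 1)) {s : ℝ} (hs : s ∈ Set.Ioo (-1:ℝ) 1) :
    DaInt a (fun t => f t - g t) s = DaInt a f s - DaInt a g s := by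
  unfold DaInt
  rw [← intervalIntegral.integral_sub (Da_integrand_integrable hf hs)
    (Da_integrand_integrable hg hs)]
  congr 1; ext t; ring

lemma Da_continuousOn_DaInt {a : ℝ} {f : ℝ → ℝ} (hf : ContinuousOn f (Set.Ioo (-1:ℝ) 1)) :
    ContinuousOn (DaInt a f) (Set.Ioo (-1:ℝ) 1) := by
  intro x hx
  set u : ℝ := (-1 + min x 0) / 2 with hu
  set v : ℝ := (1 + max x 0) / 2 with hv
  have hmin : (-1:ℝ) < min x 0 := lt_min hx.1 (by norm_num)
  have hmax : max x 0 < 1 := max_lt hx.2 (by norm_num)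
  have huv : u ≤ v := by
    have := min_le_left x 0; have := le_max_left x 0
    simp only [hu, hv]; linarith
  have hIccIoo : Set.Icc u v ⊆ Set.Ioo (-1:ℝ) 1 := by
    intro y hy
    constructor
    · have : -1 < u := by simp only [hu]; linarith
      linarith [hy.1]
    · have : v < 1 := by simp only [hv]; linarith
      linarith [hy.2]
  have hzero : (0:ℝ) ∈ Set.uIcc u v := by
    rw [Set.uIcc_of_le huv]
    exact ⟨by simp only [hu]; linarith [min_le_right x 0],
      by simp only [hv]; linarith [le_max_right x 0]⟩
  have hInt : IntervalIntegrable (fun t : ℝ => (1 - t ^ 2) ^ (a - 1) * f t) volume u v := by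
    apply ContinuousOn.intervalIntegrable
    apply Da_integrand_contOn hf
    rwa [Set.uIcc_of_le huv]
  have hcont := intervalIntegral.continuousOn_primitive_interval' hInt hzero
  rw [Set.uIcc_of_le huv] at hcont
  have hmem : Set.Icc u v ∈ 𝓝 x := by
    apply Icc_mem_nhds
    · simp only [hu]; linarith [min_le_left x 0]
    · simp only [hv]; linarith [le_max_left x 0]
  exact (hcont.continuousAt hmem).continuousWithinAt

lemma Da_bdd_of_tendsto {h : ℝ → ℝ} {L₁ L₂ : ℝ}
    (hc : ContinuousOn h (Set.Ioo (-1:ℝ) 1))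
    (h1 : Tendsto h (𝓝[Set.Ioo (-1:ℝ) 1] 1) (𝓝 L₁))
    (h2 : Tendsto h (𝓝[Set.Ioo (-1:ℝ) 1] (-1)) (𝓝 L₂)) :
    ∃ B : ℝ, ∀ s ∈ Set.Ioo (-1:ℝ) 1, |h s| ≤ B := by
  have e1 : ∀ᶠ s in 𝓝[Set.Ioo (-1:ℝ) 1] (1:ℝ), dist (h s) L₁ < 1 :=
    h1 (Metric.ball_mem_nhds _ one_pos)
  have e2 : ∀ᶠ s in 𝓝[Set.Ioo (-1:ℝ) 1] (-1:ℝ), dist (h s) L₂ < 1 :=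
    h2 (Metric.ball_mem_nhds _ one_pos)
  rw [eventually_nhdsWithin_iff, Metric.eventually_nhds_iff] at e1 e2
  obtain ⟨δ₁, hδ₁, H1⟩ := e1
  obtain ⟨δ₂, hδ₂, H2⟩ := e2
  set η : ℝ := min (min δ₁ δ₂) 1 / 2 with hη
  have hη0 : 0 < η := by positivity
  have hη1 : η ≤ 1/2 := by
    have : min (min δ₁ δ₂) 1 ≤ 1 := min_le_right _ _
    simp only [hη]; linarith
  have hηδ₁ : η < δ₁ := by
    have h1' : min (min δ₁ δ₂) 1 ≤ δ₁ := le_trans (min_le_left _ _) (min_le_left _ _)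
    simp only [hη]; linarith
  have hηδ₂ : η < δ₂ := by
    have h1' : min (min δ₁ δ₂) 1 ≤ δ₂ := le_trans (min_le_left _ _) (min_le_right _ _)
    simp only [hη]; linarith
  have hKsub : Set.Icc (-1+η) (1-η) ⊆ Set.Ioo (-1:ℝ) 1 := by
    intro x hx; exact ⟨by linarith [hx.1], by linarith [hx.2]⟩
  obtain ⟨C, hC⟩ := (isCompact_Icc (a := -1+η) (b := 1-η)).exists_bound_of_continuousOn
    (hc.mono hKsub)
  refine ⟨max C (max (|L₁| + 1) (|L₂| + 1)), fun s hs => ?_⟩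
  rcases le_or_gt s (-1+η) with hsl | hsl
  · have : dist s (-1) < δ₂ := by
      rw [Real.dist_eq, abs_lt]; constructor <;> [linarith [hs.1]; linarith]
    have := H2 this hs
    have : |h s| ≤ |L₂| + 1 := by
      rw [Real.dist_eq] at this
      calc |h s| = |h s - L₂ + L₂| := by ring_nf
        _ ≤ |h s - L₂| + |L₂| := abs_add_le _ _
        _ ≤ |L₂| + 1 := by linarith
    exact le_trans this (le_trans (le_max_right _ _) (le_max_right _ _))
  rcases le_or_gt (1-η) s with hsr | hsr
  · have : dist s 1 < δ₁ := by
      rw [Real.dist_eq, abs_lt]; constructor <;> [linarith; linarith [hs.2]]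
    have := H1 this hs
    have : |h s| ≤ |L₁| + 1 := by
      rw [Real.dist_eq] at this
      calc |h s| = |h s - L₁ + L₁| := by ring_nf
        _ ≤ |h s - L₁| + |L₁| := abs_add_le _ _
        _ ≤ |L₁| + 1 := by linarith
    exact le_trans this (le_trans (le_max_left _ _) (le_max_right _ _))
  · have := hC s ⟨le_of_lt hsl, le_of_lt hsr⟩
    rw [Real.norm_eq_abs] at this
    exact le_trans this (le_max_left _ _)

lemma Da_memDa_bdd_weight {a : ℝ} {f : ℝ → ℝ} (hf : MemDa a f) :
    ∃ B : ℝ, ∀ s ∈ Set.Ioo (-1:ℝ) 1, (1 - s ^ 2) ^ a * |f s| ≤ B := by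
  obtain ⟨B, hB⟩ := Da_bdd_of_tendsto ((Da_contOn_weight le_rfl).mul hf.1) hf.2.1 hf.2.2.1
  refine ⟨B, fun s hs => ?_⟩
  have := hB s hs
  simp only [Pi.mul_apply] at this
  rwa [abs_mul, abs_of_pos (Real.rpow_pos_of_pos (Da_weight_pos hs) a)] at this

lemma Da_memDa_bdd_int {a : ℝ} {f : ℝ → ℝ} (hf : MemDa a f) :
    ∃ B : ℝ, ∀ s ∈ Set.Ioo (-1:ℝ) 1, |DaInt a f s| ≤ B := by
  obtain ⟨L₁, hL₁⟩ := hf.2.2.2.1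
  obtain ⟨L₂, hL₂⟩ := hf.2.2.2.2
  exact Da_bdd_of_tendsto (Da_continuousOn_DaInt hf.1) hL₁ hL₂

lemma Da_iSup_int_nonneg {a : ℝ} (f : ℝ → ℝ) :
    0 ≤ ⨆ s : Set.Ioo (-1:ℝ) 1, |DaInt a f (s:ℝ)| :=
  Real.iSup_nonneg fun _ => abs_nonneg _

lemma Da_iSup_weight_nonneg {a : ℝ} (f : ℝ → ℝ) :
    0 ≤ ⨆ s : Set.Ioo (-1:ℝ) 1, (1 - (s:ℝ) ^ 2) ^ a * |f (s:ℝ)| :=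
  Real.iSup_nonneg fun s =>
    mul_nonneg (Real.rpow_nonneg (le_of_lt (Da_weight_pos s.2)) a) (abs_nonneg _)

lemma Da_le_DaNorm_weight {a : ℝ} {f g : ℝ → ℝ} (hf : MemDa a f) (hg : MemDa a g)
    {s : ℝ} (hs : s ∈ Set.Ioo (-1:ℝ) 1) :
    (1 - s ^ 2) ^ a * |f s - g s| ≤ DaNorm a (fun t => f t - g t) := by
  obtain ⟨Bf, hBf⟩ := Da_memDa_bdd_weight hf
  obtain ⟨Bg, hBg⟩ := Da_memDa_bdd_weight hg
  have hbdd : BddAbove (Set.range fun s : Set.Ioo (-1:ℝ) 1 =>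
      (1 - (s:ℝ) ^ 2) ^ a * |f (s:ℝ) - g (s:ℝ)|) := by
    refine ⟨Bf + Bg, fun y hy => ?_⟩
    obtain ⟨t, rfl⟩ := hy
    calc (1 - (t:ℝ) ^ 2) ^ a * |f (t:ℝ) - g (t:ℝ)|
        ≤ (1 - (t:ℝ) ^ 2) ^ a * (|f (t:ℝ)| + |g (t:ℝ)|) := by
          apply mul_le_mul_of_nonneg_left (abs_sub _ _)
            (Real.rpow_nonneg (le_of_lt (Da_weight_pos t.2)) a)
      _ = (1 - (t:ℝ) ^ 2) ^ a * |f (t:ℝ)| + (1 - (t:ℝ) ^ 2) ^ a * |g (t:ℝ)| := by ring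
      _ ≤ Bf + Bg := add_le_add (hBf t t.2) (hBg t t.2)
  have h1 : (1 - s ^ 2) ^ a * |f s - g s| ≤
      ⨆ t : Set.Ioo (-1:ℝ) 1, (1 - (t:ℝ) ^ 2) ^ a * |f (t:ℝ) - g (t:ℝ)| :=
    le_ciSup hbdd ⟨s, hs⟩
  have h2 := Da_iSup_int_nonneg (a := a) (fun t => f t - g t)
  unfold DaNorm; linarith

lemma Da_le_DaNorm_int {a : ℝ} {f g : ℝ → ℝ} (hf : MemDa a f) (hg : MemDa a g)
    {s : ℝ} (hs : s ∈ Set.Ioo (-1:ℝ) 1) :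
    |DaInt a f s - DaInt a g s| ≤ DaNorm a (fun t => f t - g t) := by
  obtain ⟨Bf, hBf⟩ := Da_memDa_bdd_int hf
  obtain ⟨Bg, hBg⟩ := Da_memDa_bdd_int hg
  have hbdd : BddAbove (Set.range fun s : Set.Ioo (-1:ℝ) 1 =>
      |DaInt a (fun t => f t - g t) (s:ℝ)|) := by
    refine ⟨Bf + Bg, fun y hy => ?_⟩
    obtain ⟨t, rfl⟩ := hy
    show |DaInt a (fun t => f t - g t) (t:ℝ)| ≤ Bf + Bg
    rw [DaInt_sub hf.1 hg.1 t.2]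
    calc |DaInt a f (t:ℝ) - DaInt a g (t:ℝ)| ≤ |DaInt a f (t:ℝ)| + |DaInt a g (t:ℝ)| :=
        abs_sub _ _
      _ ≤ Bf + Bg := add_le_add (hBf t t.2) (hBg t t.2)
  have h1 : |DaInt a (fun t => f t - g t) s| ≤
      ⨆ t : Set.Ioo (-1:ℝ) 1, |DaInt a (fun t => f t - g t) (t:ℝ)| :=
    le_ciSup hbdd ⟨s, hs⟩
  rw [DaInt_sub hf.1 hg.1 hs] at h1
  have h2 := Da_iSup_weight_nonneg (a := a) (fun t => f t - g t)
  unfold DaNorm; linarith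

lemma Da_exists_tendsto_of_unif {G : ℕ → ℝ → ℝ} {g : ℝ → ℝ} {L : ℕ → ℝ} {l : Filter ℝ}
    [hl : l.NeBot]
    (hGL : ∀ m, Tendsto (G m) l (𝓝 (L m)))
    (hC : ∀ ε > 0, ∃ N, ∀ m ≥ N, ∀ k ≥ N, ∀ᶠ s in l, |G m s - G k s| ≤ ε)
    (hU : ∀ ε > 0, ∃ N, ∀ m ≥ N, ∀ᶠ s in l, |G m s - g s| ≤ ε) :
    ∃ M : ℝ, Tendsto g l (𝓝 M) := by
  have hLC : CauchySeq L := by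
    rw [Metric.cauchySeq_iff]
    intro ε hε
    obtain ⟨N, hN⟩ := hC (ε/2) (half_pos hε)
    refine ⟨N, fun m hm k hk => ?_⟩
    have h1 : Tendsto (fun s => |G m s - G k s|) l (𝓝 |L m - L k|) :=
      ((hGL m).sub (hGL k)).abs
    have h2 := le_of_tendsto h1 (hN m hm k hk)
    rw [Real.dist_eq]; linarith
  obtain ⟨M, hM⟩ := cauchySeq_tendsto_of_complete hLC
  refine ⟨M, ?_⟩
  rw [Metric.tendsto_nhds]
  intro ε hε
  obtain ⟨N₁, hN₁⟩ := hU (ε/4) (by linarith)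
  obtain ⟨N₂, hN₂⟩ := Metric.tendsto_atTop.1 hM (ε/4) (by linarith)
  set m := max N₁ N₂ with hm
  have h3 := hN₂ m (le_max_right _ _)
  rw [Real.dist_eq] at h3
  filter_upwards [hN₁ m (le_max_left _ _),
    Metric.tendsto_nhds.1 (hGL m) (ε/4) (by linarith)] with s h1 h2
  rw [Real.dist_eq] at h2 ⊢
  have h1' : |g s - G m s| ≤ ε/4 := by rwa [abs_sub_comm] at h1
  calc |g s - M| = |(g s - G m s) + (G m s - L m) + (L m - M)| := by ring_nf
    _ ≤ |(g s - G m s) + (G m s - L m)| + |L m - M| := abs_add_le _ _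
    _ ≤ |g s - G m s| + |G m s - L m| + |L m - M| := by
        have := abs_add_le (g s - G m s) (G m s - L m); linarith
    _ < ε := by linarith

lemma Da_contOn_limit {a : ℝ} {F : ℕ → ℝ → ℝ} {f : ℝ → ℝ}
    (hFc : ∀ m, ContinuousOn (F m) (Set.Ioo (-1:ℝ) 1))
    (hU : ∀ ε > 0, ∃ N, ∀ m ≥ N, ∀ s ∈ Set.Ioo (-1:ℝ) 1,
      (1 - s ^ 2) ^ a * |F m s - f s| ≤ ε) :
    ContinuousOn f (Set.Ioo (-1:ℝ) 1) := by
  intro x hx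
  set u : ℝ := (-1 + x) / 2 with hu
  set v : ℝ := (1 + x) / 2 with hv
  have hux : u < x := by simp only [hu]; linarith [hx.1]
  have hxv : x < v := by simp only [hv]; linarith [hx.2]
  have hKsub : Set.Icc u v ⊆ Set.Ioo (-1:ℝ) 1 := by
    intro y hy
    exact ⟨by simp only [hu] at hy; linarith [hy.1, hx.1],
      by simp only [hv] at hy; linarith [hy.2, hx.2]⟩
  have hcontinv : ContinuousOn (fun t : ℝ => ((1 - t ^ 2) ^ a)⁻¹) (Set.Icc u v) := by
    apply ContinuousOn.inv₀ (Da_contOn_weight hKsub)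
    intro t ht
    exact ne_of_gt (Real.rpow_pos_of_pos (Da_weight_pos (hKsub ht)) a)
  obtain ⟨C, hC⟩ := (isCompact_Icc (a := u) (b := v)).exists_bound_of_continuousOn hcontinv
  have hC0 : 0 ≤ C := le_trans (norm_nonneg _) (hC x ⟨le_of_lt hux, le_of_lt hxv⟩)
  have hunif : TendstoUniformlyOn (fun m s => F m s) f atTop (Set.Icc u v) := by
    rw [Metric.tendstoUniformlyOn_iff]
    intro ε hε
    have hε' : 0 < ε / (C + 1) := by positivity
    obtain ⟨N, hN⟩ := hU (ε / (C + 1)) hε'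
    filter_upwards [eventually_ge_atTop N] with m hm
    intro t ht
    have h1 := hN m hm t (hKsub ht)
    have hw : 0 < (1 - t ^ 2) ^ a := Real.rpow_pos_of_pos (Da_weight_pos (hKsub ht)) a
    have h2 : ((1 - t ^ 2) ^ a)⁻¹ ≤ C := by
      have := hC t ht; rwa [Real.norm_eq_abs, abs_of_pos (by positivity)] at this
    have h3 : |F m t - f t| ≤ C * (ε / (C + 1)) := by
      have heq : |F m t - f t| = ((1 - t ^ 2) ^ a)⁻¹ * ((1 - t ^ 2) ^ a * |F m t - f t|) := by
        field_simp
      rw [heq]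
      exact mul_le_mul h2 h1 (by positivity) hC0
    rw [Real.dist_eq, abs_sub_comm]
    calc |F m t - f t| ≤ C * (ε / (C + 1)) := h3
      _ < ε := by
          rw [mul_div_assoc'] at *
          rw [div_lt_iff₀ (by positivity)]
          nlinarith
  have hcf : ContinuousOn f (Set.Icc u v) :=
    hunif.continuousOn (Eventually.of_forall fun m => (hFc m).mono hKsub).frequently
  exact (hcf.continuousAt (Icc_mem_nhds hux hxv)).continuousWithinAt

lemma Da_DaInt_tendsto {a : ℝ} {F : ℕ → ℝ → ℝ} {f : ℝ → ℝ}
    (hFc : ∀ m, ContinuousOn (F m) (Set.Ioo (-1:ℝ) 1))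
    (hfc : ContinuousOn f (Set.Ioo (-1:ℝ) 1))
    (hU : ∀ ε > 0, ∃ N, ∀ m ≥ N, ∀ s ∈ Set.Ioo (-1:ℝ) 1,
      (1 - s ^ 2) ^ a * |F m s - f s| ≤ ε)
    {s : ℝ} (hs : s ∈ Set.Ioo (-1:ℝ) 1) :
    Tendsto (fun m => DaInt a (F m) s) atTop (𝓝 (DaInt a f s)) := by
  have hKsub := Da_uIcc_subset_Ioo hs
  have hcontinv : ContinuousOn (fun t : ℝ => (1 - t ^ 2)⁻¹) (Set.uIcc 0 s) := by
    apply ContinuousOn.inv₀ ((continuous_const.sub (continuous_pow 2)).continuousOn)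
    intro t ht; exact ne_of_gt (Da_weight_pos (hKsub ht))
  obtain ⟨C, hC⟩ := (isCompact_uIcc (a := 0) (b := s)).exists_bound_of_continuousOn hcontinv
  have hC0 : 0 ≤ C := le_trans (norm_nonneg _) (hC 0 Set.left_mem_uIcc)
  rw [Metric.tendsto_atTop]
  intro ε hε
  have hε' : 0 < ε / (2 * (C + 1)) := by positivity
  obtain ⟨N, hN⟩ := hU (ε / (2 * (C + 1))) hε'
  refine ⟨N, fun m hm => ?_⟩
  rw [Real.dist_eq]
  have hsub : DaInt a (F m) s - DaInt a f s
      = ∫ t in (0:ℝ)..s, (1 - t ^ 2) ^ (a - 1) * (F m t - f t) := by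
    unfold DaInt
    rw [← intervalIntegral.integral_sub (Da_integrand_integrable (hFc m) hs)
      (Da_integrand_integrable hfc hs)]
    congr 1; ext t; ring
  rw [hsub]
  have hbound : ∀ t ∈ Set.uIoc (0:ℝ) s,
      ‖(1 - t ^ 2) ^ (a - 1) * (F m t - f t)‖ ≤ C * (ε / (2 * (C + 1))) := by
    intro t ht
    have htIoo : t ∈ Set.Ioo (-1:ℝ) 1 := hKsub (Set.uIoc_subset_uIcc ht)
    have hwpos := Da_weight_pos htIoo
    have hsplit : (1 - t ^ 2) ^ (a - 1) = (1 - t ^ 2)⁻¹ * (1 - t ^ 2) ^ a := by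
      have he : a - 1 = a + (-1) := by ring
      rw [he, Real.rpow_add hwpos, Real.rpow_neg_one, mul_comm]
    have h2 : (1 - t ^ 2)⁻¹ ≤ C := by
      have := hC t (Set.uIoc_subset_uIcc ht)
      rwa [Real.norm_eq_abs, abs_of_pos (by positivity)] at this
    rw [Real.norm_eq_abs, abs_mul, hsplit, abs_mul,
      abs_of_pos (show (0:ℝ) < (1 - t^2)⁻¹ by positivity),
      abs_of_pos (Real.rpow_pos_of_pos hwpos a), mul_assoc]
    exact mul_le_mul h2 (hN m hm t htIoo) (by positivity) hC0
  have hInt := intervalIntegral.norm_integral_le_of_norm_le_const hbound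
  rw [Real.norm_eq_abs] at hInt
  have hsabs : |s - 0| ≤ 1 := by
    rw [sub_zero, abs_le]; exact ⟨le_of_lt hs.1, le_of_lt hs.2⟩
  calc |∫ t in (0:ℝ)..s, (1 - t ^ 2) ^ (a - 1) * (F m t - f t)|
      ≤ C * (ε / (2 * (C + 1))) * |s - 0| := hInt
    _ ≤ C * (ε / (2 * (C + 1))) * 1 := by
        apply mul_le_mul_of_nonneg_left hsabs (by positivity)
    _ < ε := by
        rw [mul_one]
        have h1 : C * (ε / (2*(C+1))) ≤ (C+1) * (ε / (2*(C+1))) :=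
          mul_le_mul_of_nonneg_right (by linarith) (le_of_lt hε')
        have h2 : (C+1) * (ε / (2*(C+1))) = ε/2 := by field_simp
        linarith

end DaCompleteAux

/-- `D^a` is complete with respect to `‖·‖_{D^a}`: every Cauchy sequence in `D^a`
converges in the `D^a`-norm to an element of `D^a`. -/
theorem Da_complete (a : ℝ) (ha : 0 < a) (F : ℕ → ℝ → ℝ) (hF : ∀ m, MemDa a (F m))
    (hCauchy : ∀ ε > 0, ∃ N : ℕ, ∀ m ≥ N, ∀ k ≥ N,
      DaNorm a (fun s => F m s - F k s) < ε) :
    ∃ f : ℝ → ℝ, MemDa a f ∧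
      Tendsto (fun m => DaNorm a (fun s => F m s - f s)) atTop (𝓝 0) := by
  haveI hne : Nonempty (Set.Ioo (-1:ℝ) 1) := ⟨⟨0, Da_zero_mem_Ioo⟩⟩
  have hcl1 : (1:ℝ) ∈ closure (Set.Ioo (-1:ℝ) 1) := by
    rw [closure_Ioo (by norm_num : (-1:ℝ) ≠ 1)]
    exact ⟨by norm_num, le_refl 1⟩
  have hcl2 : (-1:ℝ) ∈ closure (Set.Ioo (-1:ℝ) 1) := by
    rw [closure_Ioo (by norm_num : (-1:ℝ) ≠ 1)]
    exact ⟨le_refl _, by norm_num⟩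
  haveI hnb1 : (𝓝[Set.Ioo (-1:ℝ) 1] (1:ℝ)).NeBot := mem_closure_iff_nhdsWithin_neBot.1 hcl1
  haveI hnb2 : (𝓝[Set.Ioo (-1:ℝ) 1] (-1:ℝ)).NeBot := mem_closure_iff_nhdsWithin_neBot.1 hcl2
  -- pointwise Cauchy bounds
  have hPW : ∀ ε > 0, ∃ N, ∀ m ≥ N, ∀ k ≥ N, ∀ s ∈ Set.Ioo (-1:ℝ) 1,
      (1 - s ^ 2) ^ a * |F m s - F k s| < ε ∧
        |DaInt a (F m) s - DaInt a (F k) s| < ε := by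
    intro ε hε
    obtain ⟨N, hN⟩ := hCauchy ε hε
    exact ⟨N, fun m hm k hk s hs =>
      ⟨lt_of_le_of_lt (Da_le_DaNorm_weight (hF m) (hF k) hs) (hN m hm k hk),
       lt_of_le_of_lt (Da_le_DaNorm_int (hF m) (hF k) hs) (hN m hm k hk)⟩⟩
  -- the pointwise limit
  set f : ℝ → ℝ := fun s => limUnder atTop (fun m => F m s) with hfdef
  have hlim : ∀ s ∈ Set.Ioo (-1:ℝ) 1, Tendsto (fun m => F m s) atTop (𝓝 (f s)) := by
    intro s hs
    have hc : CauchySeq (fun m => F m s) := by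
      rw [Metric.cauchySeq_iff]
      intro ε hε
      have hw : 0 < (1 - s ^ 2) ^ a := Real.rpow_pos_of_pos (Da_weight_pos hs) a
      obtain ⟨N, hN⟩ := hPW (ε * ((1 - s ^ 2) ^ a)) (by positivity)
      refine ⟨N, fun m hm k hk => ?_⟩
      have h1 := (hN m hm k hk s hs).1
      rw [Real.dist_eq]
      nlinarith [abs_nonneg (F m s - F k s)]
    obtain ⟨x, hx⟩ := cauchySeq_tendsto_of_complete hc
    have : f s = x := hx.limUnder_eq
    rwa [this]
  -- uniform weighted approximation
  have hU1 : ∀ ε > 0, ∃ N, ∀ m ≥ N, ∀ s ∈ Set.Ioo (-1:ℝ) 1,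
      (1 - s ^ 2) ^ a * |F m s - f s| ≤ ε := by
    intro ε hε
    obtain ⟨N, hN⟩ := hPW ε hε
    refine ⟨N, fun m hm s hs => ?_⟩
    have ht : Tendsto (fun k => (1 - s ^ 2) ^ a * |F m s - F k s|) atTop
        (𝓝 ((1 - s ^ 2) ^ a * |F m s - f s|)) :=
      ((tendsto_const_nhds.sub (hlim s hs)).abs).const_mul _
    apply le_of_tendsto ht
    filter_upwards [eventually_ge_atTop N] with k hk
    exact le_of_lt (hN m hm k hk s hs).1
  have hfc : ContinuousOn f (Set.Ioo (-1:ℝ) 1) := Da_contOn_limit (fun m => (hF m).1) hU1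
  have hDlim : ∀ s ∈ Set.Ioo (-1:ℝ) 1,
      Tendsto (fun m => DaInt a (F m) s) atTop (𝓝 (DaInt a f s)) :=
    fun s hs => Da_DaInt_tendsto (fun m => (hF m).1) hfc hU1 hs
  -- uniform integral approximation
  have hU2 : ∀ ε > 0, ∃ N, ∀ m ≥ N, ∀ s ∈ Set.Ioo (-1:ℝ) 1,
      |DaInt a (F m) s - DaInt a f s| ≤ ε := by
    intro ε hε
    obtain ⟨N, hN⟩ := hPW ε hε
    refine ⟨N, fun m hm s hs => ?_⟩
    have ht : Tendsto (fun k => |DaInt a (F m) s - DaInt a (F k) s|) atTop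
        (𝓝 |DaInt a (F m) s - DaInt a f s|) :=
      (tendsto_const_nhds.sub (hDlim s hs)).abs
    apply le_of_tendsto ht
    filter_upwards [eventually_ge_atTop N] with k hk
    exact le_of_lt (hN m hm k hk s hs).2
  -- weighted limit at the endpoints
  have hWend : ∀ e : ℝ, (𝓝[Set.Ioo (-1:ℝ) 1] e).NeBot →
      (∀ m, Tendsto (fun s => (1 - s ^ 2) ^ a * F m s) (𝓝[Set.Ioo (-1:ℝ) 1] e) (𝓝 0)) →
      Tendsto (fun s => (1 - s ^ 2) ^ a * f s) (𝓝[Set.Ioo (-1:ℝ) 1] e) (𝓝 0) := by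
    intro e hnb hFm
    haveI := hnb
    rw [Metric.tendsto_nhds]
    intro ε hε
    obtain ⟨N, hN⟩ := hU1 (ε/3) (by linarith)
    filter_upwards [eventually_mem_nhdsWithin,
      Metric.tendsto_nhds.1 (hFm N) (ε/3) (by linarith)] with s hsIoo h2
    rw [Real.dist_eq, sub_zero] at h2 ⊢
    have h1 := hN N (le_refl N) s hsIoo
    have hwpos : 0 < (1 - s ^ 2) ^ a := Real.rpow_pos_of_pos (Da_weight_pos hsIoo) a
    have heq : (1 - s ^ 2) ^ a * f s
        = (1 - s ^ 2) ^ a * (f s - F N s) + (1 - s ^ 2) ^ a * F N s := by ring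
    have h3 : |(1 - s ^ 2) ^ a * (f s - F N s)| ≤ ε/3 := by
      rw [abs_mul, abs_of_pos hwpos, abs_sub_comm]
      exact h1
    calc |(1 - s ^ 2) ^ a * f s|
        ≤ |(1 - s ^ 2) ^ a * (f s - F N s)| + |(1 - s ^ 2) ^ a * F N s| := by
          rw [heq]; exact abs_add_le _ _
      _ < ε := by linarith
  have hW1 := hWend 1 hnb1 (fun m => (hF m).2.1)
  have hW2 := hWend (-1) hnb2 (fun m => (hF m).2.2.1)
  -- limits of the integral at the endpoints
  have hIend : ∀ e : ℝ, (𝓝[Set.Ioo (-1:ℝ) 1] e).NeBot →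
      (∀ m, ∃ L : ℝ, Tendsto (DaInt a (F m)) (𝓝[Set.Ioo (-1:ℝ) 1] e) (𝓝 L)) →
      ∃ M : ℝ, Tendsto (DaInt a f) (𝓝[Set.Ioo (-1:ℝ) 1] e) (𝓝 M) := by
    intro e hnb hFm
    haveI := hnb
    choose L hL using hFm
    apply Da_exists_tendsto_of_unif hL
    · intro ε hε
      obtain ⟨N, hN⟩ := hPW ε hε
      refine ⟨N, fun m hm k hk => ?_⟩
      filter_upwards [eventually_mem_nhdsWithin] with s hs
      exact le_of_lt (hN m hm k hk s hs).2
    · intro ε hε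
      obtain ⟨N, hN⟩ := hU2 ε hε
      refine ⟨N, fun m hm => ?_⟩
      filter_upwards [eventually_mem_nhdsWithin] with s hs
      exact hN m hm s hs
  have hL1 := hIend 1 hnb1 (fun m => (hF m).2.2.2.1)
  have hL2 := hIend (-1) hnb2 (fun m => (hF m).2.2.2.2)
  have hmem : MemDa a f := ⟨hfc, hW1, hW2, hL1, hL2⟩
  refine ⟨f, hmem, ?_⟩
  -- convergence in the `D^a`-norm
  rw [Metric.tendsto_atTop]
  intro ε hε
  obtain ⟨N₁, hN₁⟩ := hU1 (ε/4) (by linarith)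
  obtain ⟨N₂, hN₂⟩ := hU2 (ε/4) (by linarith)
  refine ⟨max N₁ N₂, fun m hm => ?_⟩
  have hs1 : (⨆ s : Set.Ioo (-1:ℝ) 1, (1 - (s:ℝ) ^ 2) ^ a * |F m (s:ℝ) - f (s:ℝ)|) ≤ ε/4 :=
    ciSup_le fun s => hN₁ m (le_trans (le_max_left _ _) hm) s s.2
  have hs2 : (⨆ s : Set.Ioo (-1:ℝ) 1, |DaInt a (fun t => F m t - f t) (s:ℝ)|) ≤ ε/4 := by
    apply ciSup_le
    intro s
    rw [DaInt_sub (hF m).1 hfc s.2]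
    exact hN₂ m (le_trans (le_max_right _ _) hm) s s.2
  have hnn1 := Da_iSup_weight_nonneg (a := a) (fun t => F m t - f t)
  have hnn2 := Da_iSup_int_nonneg (a := a) (fun t => F m t - f t)
  rw [Real.dist_eq, sub_zero]
  have hle : DaNorm a (fun s => F m s - f s) ≤ ε/2 := by
    unfold DaNorm; linarith
  have hge : 0 ≤ DaNorm a (fun s => F m s - f s) := by
    unfold DaNorm; linarith
  rw [abs_of_nonneg hge]
  linarith
end

section
/- Let a > 0, f ∈ D^a, and for r ∈ (0,1) define the truncation f^r : [-1,1] → ℝ by f^r(s) = f(r) for s ≥ r, f^r(s) = f(s) for -r < s < r, and f^r(s) = f(-r) for s ≤ -r. Then ‖f - f^r‖_{D^a} → 0 as r → 1. In particular, C([-1,1]) is dense in D^a. -/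
open Filter Topology MeasureTheory

/-- The truncation `f^r` of `f` at level `r`. -/
noncomputable def trunc (f : ℝ → ℝ) (r : ℝ) (s : ℝ) : ℝ :=
  if r ≤ s then f r else if s ≤ -r then f (-r) else f s


section Helpers

lemma eventually_nhdsWithin_metric {p : ℝ → Prop} {s : Set ℝ} {a : ℝ}
    (h : ∀ᶠ x in 𝓝[s] a, p x) : ∃ δ > 0, ∀ x ∈ s, dist x a < δ → p x := by
  rw [Filter.eventually_iff, Metric.mem_nhdsWithin_iff] at h
  obtain ⟨δ, hδ, hsub⟩ := h
  exact ⟨δ, hδ, fun x hx hd => hsub ⟨Metric.mem_ball.2 hd, hx⟩⟩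

lemma trunc_eq_right {f : ℝ → ℝ} {r t : ℝ} (h : r ≤ t) : trunc f r t = f r := if_pos h

lemma trunc_eq_left {f : ℝ → ℝ} {r t : ℝ} (hr : 0 < r) (h : t ≤ -r) :
    trunc f r t = f (-r) := by
  rw [trunc, if_neg (by linarith), if_pos h]

lemma trunc_eq_self {f : ℝ → ℝ} {r t : ℝ} (h1 : -r ≤ t) (h2 : t ≤ r) :
    trunc f r t = f t := by
  rcases eq_or_lt_of_le h2 with h | h
  · subst h; rw [trunc, if_pos le_rfl]
  · rcases eq_or_lt_of_le h1 with h' | h'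
    · rw [trunc, if_neg (not_le.2 h), if_pos h'.ge, ← h']
    · rw [trunc, if_neg (not_le.2 h), if_neg (not_le.2 h')]

lemma trunc_eq_comp (f : ℝ → ℝ) {r : ℝ} (hr : 0 < r) :
    trunc f r = fun s => f (max (-r) (min r s)) := by
  funext s
  rcases le_or_gt r s with h | h
  · rw [trunc_eq_right h, min_eq_left h, max_eq_right (by linarith)]
  · rcases le_or_gt s (-r) with h2 | h2
    · rw [trunc_eq_left hr h2, min_eq_right h.le, max_eq_left h2]
    · rw [trunc_eq_self h2.le h.le, min_eq_right h.le, max_eq_right h2.le]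

lemma trunc_continuous (f : ℝ → ℝ) (hf : ContinuousOn f (Set.Ioo (-1:ℝ) 1))
    {r : ℝ} (hr : r ∈ Set.Ioo (0:ℝ) 1) : Continuous (trunc f r) := by
  rw [trunc_eq_comp f hr.1]
  apply hf.comp_continuous (by fun_prop)
  intro x
  constructor
  · have : -r ≤ max (-r) (min r x) := le_max_left _ _
    have := hr.2; linarith
  · have h1 : min r x ≤ r := min_le_left _ _
    have h2 : max (-r) (min r x) ≤ r := max_le (by linarith [hr.1]) h1
    linarith [hr.2]

lemma contOn_pow (a : ℝ) :
    ContinuousOn (fun t : ℝ => (1 - t ^ 2) ^ (a - 1)) (Set.Ioo (-1:ℝ) 1) := by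
  apply ContinuousOn.rpow_const (by fun_prop)
  intro t ht
  left
  nlinarith [ht.1, ht.2]

lemma tail_bound {a : ℝ} (ha : 0 < a) {r s : ℝ} (hr : 0 < r) (hrs : r ≤ s) (hs : s < 1) :
    ∫ t in r..s, (1 - t ^ 2) ^ (a - 1) ≤ max 1 (2 ^ (a - 1)) / a * (1 - r ^ 2) ^ a := by
  set C := max (1:ℝ) (2 ^ (a - 1)) with hCdef
  have hC1 : (1:ℝ) ≤ C := le_max_left _ _
  have step1 : ∀ t ∈ Set.Icc r s, (1 - t ^ 2) ^ (a - 1) ≤ C * (1 - t) ^ (a - 1) := by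
    intro t ht
    have ht1 : 0 < 1 - t := by linarith [ht.2]
    have ht2 : (0:ℝ) ≤ 1 + t := by linarith [ht.1]
    have heq : (1 - t ^ 2 : ℝ) = (1 - t) * (1 + t) := by ring
    rw [heq, Real.mul_rpow ht1.le ht2]
    rw [mul_comm C _]
    apply mul_le_mul_of_nonneg_left _ (Real.rpow_nonneg ht1.le _)
    rcases le_or_gt 1 a with h | h
    · calc (1 + t) ^ (a - 1) ≤ 2 ^ (a - 1) :=
            Real.rpow_le_rpow ht2 (by linarith [ht.2]) (by linarith)
        _ ≤ C := le_max_right _ _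
    · calc (1 + t) ^ (a - 1) ≤ 1 :=
            Real.rpow_le_one_of_one_le_of_nonpos (by linarith [ht.1]) (by linarith)
        _ ≤ C := hC1
  have int1 : IntervalIntegrable (fun t => (1 - t ^ 2) ^ (a - 1)) volume r s := by
    apply ContinuousOn.intervalIntegrable
    apply (contOn_pow a).mono
    apply Set.OrdConnected.uIcc_subset Set.ordConnected_Ioo
    · exact ⟨by linarith, by linarith⟩
    · exact ⟨by linarith, hs⟩
  have int2 : IntervalIntegrable (fun t => C * (1 - t) ^ (a - 1)) volume r s := by
    apply ContinuousOn.intervalIntegrable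
    apply ContinuousOn.mul continuousOn_const
    apply ContinuousOn.rpow_const (by fun_prop)
    intro t ht
    rw [Set.uIcc_of_le hrs] at ht
    left; have := ht.2; intro hcon; nlinarith
  have step2 : ∫ t in r..s, (1 - t ^ 2) ^ (a - 1) ≤ ∫ t in r..s, C * (1 - t) ^ (a - 1) := by
    apply intervalIntegral.integral_mono_on hrs int1 int2 step1
  have step3 : ∫ t in r..s, C * (1 - t) ^ (a - 1) = C * ((1 - r) ^ a - (1 - s) ^ a) / a := by
    rw [intervalIntegral.integral_const_mul]
    have h4 : ∫ t in r..s, (1 - t) ^ (a - 1) = ∫ u in (1 - s)..(1 - r), u ^ (a - 1) := by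
      rw [← intervalIntegral.integral_comp_sub_left (fun u => u ^ (a - 1)) 1]
    rw [h4, integral_rpow (Or.inl (by linarith)), sub_add_cancel]
    ring
  have step4 : C * ((1 - r) ^ a - (1 - s) ^ a) / a ≤ C / a * (1 - r ^ 2) ^ a := by
    have h5 : (1 - r) ^ a ≤ (1 - r ^ 2) ^ a :=
      Real.rpow_le_rpow (by linarith) (by nlinarith) ha.le
    have h6 : (0:ℝ) ≤ (1 - s) ^ a := Real.rpow_nonneg (by linarith) _
    rw [div_le_iff₀ ha] at *
    have : C / a * (1 - r ^ 2) ^ a * a = C * (1 - r ^ 2) ^ a := by field_simp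
    nlinarith [Real.rpow_nonneg (show (0:ℝ) ≤ 1 - r ^ 2 by nlinarith) a]
  linarith

lemma uIcc_subset_Ioo' {c d : ℝ} (hc : c ∈ Set.Ioo (-1:ℝ) 1) (hd : d ∈ Set.Ioo (-1:ℝ) 1) :
    Set.uIcc c d ⊆ Set.Ioo (-1:ℝ) 1 := Set.ordConnected_Ioo.uIcc_subset hc hd

lemma integral_G_zero (a : ℝ) (f : ℝ → ℝ) {r c : ℝ} (h1 : -r ≤ c) (h2 : c ≤ r) :
    ∫ t in (0:ℝ)..c, (1 - t ^ 2) ^ (a - 1) * (f t - trunc f r t) = 0 := by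
  have heq : Set.EqOn (fun t => (1 - t ^ 2) ^ (a - 1) * (f t - trunc f r t))
      (fun _ => (0:ℝ)) (Set.uIcc 0 c) := by
    intro t ht
    have hb : -r ≤ t ∧ t ≤ r := by
      rcases Set.mem_uIcc.mp ht with ⟨ha', hb'⟩ | ⟨ha', hb'⟩
      · constructor <;> linarith
      · constructor <;> linarith
    simp [trunc_eq_self hb.1 hb.2]
  rw [intervalIntegral.integral_congr heq]
  simp

lemma DaInt_w_right (a : ℝ) (f : ℝ → ℝ) (hc : ContinuousOn f (Set.Ioo (-1:ℝ) 1))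
    {r : ℝ} (hr : r ∈ Set.Ioo (0:ℝ) 1) {s : ℝ} (hs : s < 1) (hrs : r ≤ s) :
    DaInt a (fun t => f t - trunc f r t) s
      = (DaInt a f s - DaInt a f r) - f r * ∫ t in r..s, (1 - t ^ 2) ^ (a - 1) := by
  have h0 : (0:ℝ) ∈ Set.Ioo (-1:ℝ) 1 := by norm_num
  have hrI : r ∈ Set.Ioo (-1:ℝ) 1 := ⟨by linarith [hr.1], hr.2⟩
  have hsI : s ∈ Set.Ioo (-1:ℝ) 1 := ⟨by linarith [hr.1], hs⟩
  have hG : ContinuousOn (fun t => (1 - t ^ 2) ^ (a - 1) * (f t - trunc f r t))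
      (Set.Ioo (-1:ℝ) 1) :=
    (contOn_pow a).mul (hc.sub (trunc_continuous f hc hr).continuousOn)
  have hF : ContinuousOn (fun t => (1 - t ^ 2) ^ (a - 1) * f t) (Set.Ioo (-1:ℝ) 1) :=
    (contOn_pow a).mul hc
  have iG1 := ((hG.mono (uIcc_subset_Ioo' h0 hrI))).intervalIntegrable (μ := volume)
  have iG2 := ((hG.mono (uIcc_subset_Ioo' hrI hsI))).intervalIntegrable (μ := volume)
  have iF1 := ((hF.mono (uIcc_subset_Ioo' h0 hrI))).intervalIntegrable (μ := volume)
  have iF2 := ((hF.mono (uIcc_subset_Ioo' hrI hsI))).intervalIntegrable (μ := volume)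
  have iP2 := (((contOn_pow a).mono (uIcc_subset_Ioo' hrI hsI))).intervalIntegrable (μ := volume)
  have hadd := intervalIntegral.integral_add_adjacent_intervals iG1 iG2
  have haddF := intervalIntegral.integral_add_adjacent_intervals iF1 iF2
  have hzero := integral_G_zero a f (r := r) (c := r) (by linarith [hr.1]) le_rfl
  have hmid : (∫ t in r..s, (1 - t ^ 2) ^ (a - 1) * (f t - trunc f r t))
      = (∫ t in r..s, (1 - t ^ 2) ^ (a - 1) * f t)
        - f r * ∫ t in r..s, (1 - t ^ 2) ^ (a - 1) := by
    rw [← intervalIntegral.integral_const_mul,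
      ← intervalIntegral.integral_sub iF2 (iP2.const_mul (f r))]
    apply intervalIntegral.integral_congr
    intro t ht
    rw [Set.uIcc_of_le hrs] at ht
    simp only [trunc_eq_right ht.1]
    ring
  simp only [DaInt]
  linarith

lemma DaInt_w_left (a : ℝ) (f : ℝ → ℝ) (hc : ContinuousOn f (Set.Ioo (-1:ℝ) 1))
    {r : ℝ} (hr : r ∈ Set.Ioo (0:ℝ) 1) {s : ℝ} (hs : -1 < s) (hsr : s ≤ -r) :
    DaInt a (fun t => f t - trunc f r t) s
      = (DaInt a f s - DaInt a f (-r)) - f (-r) * ∫ t in (-r)..s, (1 - t ^ 2) ^ (a - 1) := by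
  have h0 : (0:ℝ) ∈ Set.Ioo (-1:ℝ) 1 := by norm_num
  have hrI : -r ∈ Set.Ioo (-1:ℝ) 1 := ⟨by linarith [hr.2], by linarith [hr.1]⟩
  have hsI : s ∈ Set.Ioo (-1:ℝ) 1 := ⟨hs, by linarith [hr.1]⟩
  have hG : ContinuousOn (fun t => (1 - t ^ 2) ^ (a - 1) * (f t - trunc f r t))
      (Set.Ioo (-1:ℝ) 1) :=
    (contOn_pow a).mul (hc.sub (trunc_continuous f hc hr).continuousOn)
  have hF : ContinuousOn (fun t => (1 - t ^ 2) ^ (a - 1) * f t) (Set.Ioo (-1:ℝ) 1) :=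
    (contOn_pow a).mul hc
  have iG1 := ((hG.mono (uIcc_subset_Ioo' h0 hrI))).intervalIntegrable (μ := volume)
  have iG2 := ((hG.mono (uIcc_subset_Ioo' hrI hsI))).intervalIntegrable (μ := volume)
  have iF1 := ((hF.mono (uIcc_subset_Ioo' h0 hrI))).intervalIntegrable (μ := volume)
  have iF2 := ((hF.mono (uIcc_subset_Ioo' hrI hsI))).intervalIntegrable (μ := volume)
  have iP2 := (((contOn_pow a).mono (uIcc_subset_Ioo' hrI hsI))).intervalIntegrable (μ := volume)
  have hadd := intervalIntegral.integral_add_adjacent_intervals iG1 iG2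
  have haddF := intervalIntegral.integral_add_adjacent_intervals iF1 iF2
  have hzero := integral_G_zero a f (r := r) (c := -r) le_rfl (by linarith [hr.1])
  have hmid : (∫ t in (-r)..s, (1 - t ^ 2) ^ (a - 1) * (f t - trunc f r t))
      = (∫ t in (-r)..s, (1 - t ^ 2) ^ (a - 1) * f t)
        - f (-r) * ∫ t in (-r)..s, (1 - t ^ 2) ^ (a - 1) := by
    rw [← intervalIntegral.integral_const_mul,
      ← intervalIntegral.integral_sub iF2 (iP2.const_mul (f (-r)))]
    apply intervalIntegral.integral_congr
    intro t ht
    rw [Set.uIcc_of_ge hsr] at ht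
    simp only [trunc_eq_left hr.1 ht.2]
    ring
  simp only [DaInt]
  linarith

end Helpers

set_option maxHeartbeats 2000000 in
/-- The truncations `f^r` converge to `f` in `D^a` as `r → 1`; in particular every
element of `D^a` can be approximated in the `D^a`-norm by functions continuous on `[-1,1]`. -/
theorem trunc_tendsto (a : ℝ) (ha : 0 < a) (f : ℝ → ℝ) (hf : MemDa a f) :
    Tendsto (fun r => DaNorm a (fun s => f s - trunc f r s)) (𝓝[Set.Ioo (0:ℝ) 1] 1) (𝓝 0) ∧
    ∀ ε > 0, ∃ g : ℝ → ℝ, ContinuousOn g (Set.Icc (-1:ℝ) 1) ∧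
      DaNorm a (fun s => f s - g s) < ε := by
  obtain ⟨hcont, h1, h2, ⟨L1, hL1⟩, ⟨L2, hL2⟩⟩ := hf
  have hDaNormnn : ∀ r : ℝ, 0 ≤ DaNorm a (fun s => f s - trunc f r s) := by
    intro r
    apply add_nonneg
    · apply Real.iSup_nonneg
      intro p
      exact mul_nonneg (Real.rpow_nonneg (by nlinarith [p.2.1, p.2.2]) a) (abs_nonneg _)
    · exact Real.iSup_nonneg fun p => abs_nonneg _
  have key : ∀ ε > 0, ∀ᶠ r in 𝓝[Set.Ioo (0:ℝ) 1] 1,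
      DaNorm a (fun s => f s - trunc f r s) ≤ ε / 2 := by
    intro ε hε
    set C := max (1:ℝ) (2 ^ (a - 1)) with hCdef
    have hC1 : (1:ℝ) ≤ C := le_max_left _ _
    have hC0 : (0:ℝ) < C := by linarith
    set E1 := min (ε / 8) (a * ε / (8 * C)) with hE1def
    have hE1pos : 0 < E1 := lt_min (by linarith) (by positivity)
    have hE18 : E1 ≤ ε / 8 := min_le_left _ _
    have hE1C : E1 ≤ a * ε / (8 * C) := min_le_right _ _
    obtain ⟨δA, hδA, hA⟩ := eventually_nhdsWithin_metric
      (Metric.tendsto_nhds.mp h1 E1 hE1pos)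
    obtain ⟨δB, hδB, hB⟩ := eventually_nhdsWithin_metric
      (Metric.tendsto_nhds.mp h2 E1 hE1pos)
    obtain ⟨δC, hδC, hC'⟩ := eventually_nhdsWithin_metric
      (Metric.tendsto_nhds.mp hL1 (ε / 16) (by linarith))
    obtain ⟨δD, hδD, hD⟩ := eventually_nhdsWithin_metric
      (Metric.tendsto_nhds.mp hL2 (ε / 16) (by linarith))
    set δ := min (min δA δB) (min δC δD) with hδdef
    have hδpos : 0 < δ := lt_min (lt_min hδA hδB) (lt_min hδC hδD)
    filter_upwards [self_mem_nhdsWithin,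
      nhdsWithin_le_nhds (Metric.ball_mem_nhds (1:ℝ) hδpos)] with r hrmem hrball
    have hr0 : (0:ℝ) < r := hrmem.1
    have hr1 : r < 1 := hrmem.2
    have hrI : r ∈ Set.Ioo (-1:ℝ) 1 := ⟨by linarith, hr1⟩
    have hrI' : -r ∈ Set.Ioo (-1:ℝ) 1 := ⟨by linarith, by linarith⟩
    have hrd : 1 - r < δ := by
      have := Metric.mem_ball.mp hrball
      rw [Real.dist_eq, abs_of_neg (by linarith)] at this
      linarith
    have hnear1 : ∀ x ∈ Set.Ioo (-1:ℝ) 1, r ≤ x →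
        (1 - x ^ 2) ^ a * |f x| < E1 ∧ |DaInt a f x - L1| < ε / 16 := by
      intro x hx hrx
      have hdx : dist x 1 < δ := by
        rw [Real.dist_eq, abs_of_neg (by linarith [hx.2])]
        linarith
      constructor
      · have := hA x hx (lt_of_lt_of_le hdx (le_trans (min_le_left _ _) (min_le_left _ _)))
        rw [dist_zero_right, Real.norm_eq_abs, abs_mul,
          abs_of_nonneg (Real.rpow_nonneg (by nlinarith [hx.1, hx.2] : (0:ℝ) ≤ 1 - x ^ 2) a)] at this
        exact this
      · have := hC' x hx (lt_of_lt_of_le hdx (le_trans (min_le_right _ _) (min_le_left _ _)))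
        rwa [Real.dist_eq] at this
    have hnear2 : ∀ x ∈ Set.Ioo (-1:ℝ) 1, x ≤ -r →
        (1 - x ^ 2) ^ a * |f x| < E1 ∧ |DaInt a f x - L2| < ε / 16 := by
      intro x hx hrx
      have hdx : dist x (-1) < δ := by
        rw [Real.dist_eq, sub_neg_eq_add, abs_of_pos (by linarith [hx.1])]
        linarith
      constructor
      · have := hB x hx (lt_of_lt_of_le hdx (le_trans (min_le_left _ _) (min_le_right _ _)))
        rw [dist_zero_right, Real.norm_eq_abs, abs_mul,
          abs_of_nonneg (Real.rpow_nonneg (by nlinarith [hx.1, hx.2] : (0:ℝ) ≤ 1 - x ^ 2) a)] at this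
        exact this
      · have := hD x hx (lt_of_lt_of_le hdx (le_trans (min_le_right _ _) (min_le_right _ _)))
        rwa [Real.dist_eq] at this
    have hsup1 : ∀ p : Set.Ioo (-1:ℝ) 1,
        (1 - (p:ℝ) ^ 2) ^ a * |f (p:ℝ) - trunc f r (p:ℝ)| ≤ ε / 4 := by
      rintro ⟨s, hs⟩
      simp only
      rcases le_or_gt r s with hrs | hrs
      · rw [trunc_eq_right hrs]
        have hfs := (hnear1 s hs hrs).1
        have hfr := (hnear1 r hrI le_rfl).1
        have hmono : (1 - s ^ 2) ^ a ≤ (1 - r ^ 2) ^ a :=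
          Real.rpow_le_rpow (by nlinarith [hs.1, hs.2]) (by nlinarith) ha.le
        calc (1 - s ^ 2) ^ a * |f s - f r|
            ≤ (1 - s ^ 2) ^ a * (|f s| + |f r|) :=
              mul_le_mul_of_nonneg_left (abs_sub _ _)
                (Real.rpow_nonneg (by nlinarith [hs.1, hs.2]) a)
          _ = (1 - s ^ 2) ^ a * |f s| + (1 - s ^ 2) ^ a * |f r| := mul_add _ _ _
          _ ≤ E1 + (1 - r ^ 2) ^ a * |f r| :=
              add_le_add hfs.le (mul_le_mul_of_nonneg_right hmono (abs_nonneg _))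
          _ ≤ ε / 8 + ε / 8 := add_le_add hE18 (hfr.le.trans hE18)
          _ = ε / 4 := by ring
      · rcases le_or_gt s (-r) with hsr | hsr
        · rw [trunc_eq_left hr0 hsr]
          have hfs := (hnear2 s hs hsr).1
          have hfr := (hnear2 (-r) hrI' le_rfl).1
          rw [neg_sq] at hfr
          have hprod : (0:ℝ) ≤ (r - s) * (-r - s) :=
            mul_nonneg (by linarith) (by linarith)
          have hmono : (1 - s ^ 2) ^ a ≤ (1 - r ^ 2) ^ a :=
            Real.rpow_le_rpow (by nlinarith [hs.1, hs.2]) (by nlinarith [hprod]) ha.le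
          calc (1 - s ^ 2) ^ a * |f s - f (-r)|
              ≤ (1 - s ^ 2) ^ a * (|f s| + |f (-r)|) :=
                mul_le_mul_of_nonneg_left (abs_sub _ _)
                  (Real.rpow_nonneg (by nlinarith [hs.1, hs.2]) a)
            _ = (1 - s ^ 2) ^ a * |f s| + (1 - s ^ 2) ^ a * |f (-r)| := mul_add _ _ _
            _ ≤ E1 + (1 - r ^ 2) ^ a * |f (-r)| :=
                add_le_add hfs.le (mul_le_mul_of_nonneg_right hmono (abs_nonneg _))
            _ ≤ ε / 8 + ε / 8 := add_le_add hE18 (hfr.le.trans hE18)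
            _ = ε / 4 := by ring
        · rw [trunc_eq_self hsr.le hrs.le, sub_self, abs_zero, mul_zero]
          linarith
    have hsup2 : ∀ p : Set.Ioo (-1:ℝ) 1,
        |DaInt a (fun t => f t - trunc f r t) (p:ℝ)| ≤ ε / 4 := by
      rintro ⟨s, hs⟩
      simp only
      rcases le_or_gt r s with hrs | hrs
      · rw [DaInt_w_right a f hcont hrmem hs.2 hrs]
        set I := ∫ t in r..s, (1 - t ^ 2) ^ (a - 1) with hIdef
        have hInn : 0 ≤ I := intervalIntegral.integral_nonneg hrs
          (fun u hu => Real.rpow_nonneg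
            (by nlinarith [hu.1, hu.2, hs.2] : (0:ℝ) ≤ 1 - u ^ 2) _)
        have hIle : I ≤ C / a * (1 - r ^ 2) ^ a := tail_bound ha hr0 hrs hs.2
        have hterm : |f r * I| ≤ ε / 8 := by
          rw [abs_mul, abs_of_nonneg hInn]
          calc |f r| * I ≤ |f r| * (C / a * (1 - r ^ 2) ^ a) :=
                mul_le_mul_of_nonneg_left hIle (abs_nonneg _)
            _ = C / a * ((1 - r ^ 2) ^ a * |f r|) := by ring
            _ ≤ C / a * E1 :=
                mul_le_mul_of_nonneg_left (hnear1 r hrI le_rfl).1.le (by positivity)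
            _ ≤ C / a * (a * ε / (8 * C)) := mul_le_mul_of_nonneg_left hE1C (by positivity)
            _ = ε / 8 := by field_simp
        have hs1 := (hnear1 s hs hrs).2
        have hr1' := (hnear1 r hrI le_rfl).2
        have heq : DaInt a f s - DaInt a f r - f r * I
            = (DaInt a f s - L1) - (DaInt a f r - L1) - f r * I := by ring
        calc |DaInt a f s - DaInt a f r - f r * I|
            = |(DaInt a f s - L1) - (DaInt a f r - L1) - f r * I| := by rw [heq]
          _ ≤ |(DaInt a f s - L1) - (DaInt a f r - L1)| + |f r * I| := abs_sub _ _
          _ ≤ (|DaInt a f s - L1| + |DaInt a f r - L1|) + |f r * I| :=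
              add_le_add_left (abs_sub _ _) _
          _ ≤ (ε / 16 + ε / 16) + ε / 8 := add_le_add (add_le_add hs1.le hr1'.le) hterm
          _ = ε / 4 := by ring
      · rcases le_or_gt s (-r) with hsr | hsr
        · rw [DaInt_w_left a f hcont hrmem hs.1 hsr]
          have hIeq : (∫ t in (-r)..s, (1 - t ^ 2) ^ (a - 1))
              = -∫ t in r..(-s), (1 - t ^ 2) ^ (a - 1) := by
            have hcn := intervalIntegral.integral_comp_neg (a := s) (b := -r)
              (fun t : ℝ => (1 - t ^ 2) ^ (a - 1))
            simp only [neg_sq, neg_neg] at hcn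
            rw [intervalIntegral.integral_symm, hcn]
          rw [hIeq]
          set I := ∫ t in r..(-s), (1 - t ^ 2) ^ (a - 1) with hIdef
          have hrms : r ≤ -s := by linarith
          have hmsI : -s < 1 := by linarith [hs.1]
          have hInn : 0 ≤ I := intervalIntegral.integral_nonneg hrms
            (fun u hu => Real.rpow_nonneg
              (by nlinarith [hu.1, hu.2, hmsI] : (0:ℝ) ≤ 1 - u ^ 2) _)
          have hIle : I ≤ C / a * (1 - r ^ 2) ^ a := tail_bound ha hr0 hrms hmsI
          have hfr := (hnear2 (-r) hrI' le_rfl).1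
          rw [neg_sq] at hfr
          have hterm : |f (-r) * I| ≤ ε / 8 := by
            rw [abs_mul, abs_of_nonneg hInn]
            calc |f (-r)| * I ≤ |f (-r)| * (C / a * (1 - r ^ 2) ^ a) :=
                  mul_le_mul_of_nonneg_left hIle (abs_nonneg _)
              _ = C / a * ((1 - r ^ 2) ^ a * |f (-r)|) := by ring
              _ ≤ C / a * E1 := mul_le_mul_of_nonneg_left hfr.le (by positivity)
              _ ≤ C / a * (a * ε / (8 * C)) := mul_le_mul_of_nonneg_left hE1C (by positivity)
              _ = ε / 8 := by field_simp
          have hs1 := (hnear2 s hs hsr).2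
          have hr1' := (hnear2 (-r) hrI' le_rfl).2
          have heq : DaInt a f s - DaInt a f (-r) - f (-r) * -I
              = (DaInt a f s - L2) - (DaInt a f (-r) - L2) + f (-r) * I := by ring
          calc |DaInt a f s - DaInt a f (-r) - f (-r) * -I|
              = |(DaInt a f s - L2) - (DaInt a f (-r) - L2) + f (-r) * I| := by rw [heq]
            _ ≤ |(DaInt a f s - L2) - (DaInt a f (-r) - L2)| + |f (-r) * I| := abs_add_le _ _
            _ ≤ (|DaInt a f s - L2| + |DaInt a f (-r) - L2|) + |f (-r) * I| :=
                add_le_add_left (abs_sub _ _) _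
            _ ≤ (ε / 16 + ε / 16) + ε / 8 := add_le_add (add_le_add hs1.le hr1'.le) hterm
            _ = ε / 4 := by ring
        · have hz : DaInt a (fun t => f t - trunc f r t) s = 0 := by
            simp only [DaInt]
            exact integral_G_zero a f (by linarith) (by linarith)
          rw [hz, abs_zero]
          linarith
    have hgoal : DaNorm a (fun s => f s - trunc f r s) ≤ ε / 4 + ε / 4 := by
      apply add_le_add
      · exact Real.iSup_le (fun p => hsup1 p) (by linarith)
      · exact Real.iSup_le (fun p => hsup2 p) (by linarith)
    linarith
  have main : Tendsto (fun r => DaNorm a (fun s => f s - trunc f r s))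
      (𝓝[Set.Ioo (0:ℝ) 1] 1) (𝓝 0) := by
    rw [NormedAddCommGroup.tendsto_nhds_zero]
    intro ε hε
    filter_upwards [key ε hε] with r hk
    rw [Real.norm_eq_abs, abs_of_nonneg (hDaNormnn r)]
    linarith
  refine ⟨main, fun ε hε => ?_⟩
  have hne : (𝓝[Set.Ioo (0:ℝ) 1] (1:ℝ)).NeBot := by
    rw [← mem_closure_iff_nhdsWithin_neBot, closure_Ioo (by norm_num : (0:ℝ) ≠ 1)]
    exact Set.mem_Icc.mpr ⟨by norm_num, le_rfl⟩
  obtain ⟨r, hlt, hrmem⟩ :=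
    ((main.eventually_lt_const hε).and self_mem_nhdsWithin).exists
  exact ⟨trunc f r, (trunc_continuous f hcont hrmem).continuousOn, hlt⟩
end

section
/- Let a > 0 and let f ∈ D^a be an even function. Then J_a(I_a(f)) = f, where I_a(f)(s) = sign(s)[s^{-1}(1-s²)^a f(s) + 2a∫_{-sign(s)}^s f(t)(1-t²)^{a-1}dt] and J_a(u)(s) = -|s|u(1)/2 + |s|(1-s²)^{-a}u(s) - 2a|s|∫₀^s t(1-t²)^{-(a+1)}u(t)dt for s ≠ 0. -/
open Filter Topology MeasureTheory

/-! Evenness of `f` makes `F = DaInt a f` odd, so `F(±1) = ±L`; hence, away from `0`,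
`I_a f(t) = |t|⁻¹ (1-t²)^a f(t) + 2a (sign t · F(t) + L)` and `I_a f(1) = 4aL`.
On the segment from `0` to `s` the integrand of `J_a` is then the derivative of
`(1-t²)^(-a) (sign s · F(t) + L)`, so the integral is explicit and everything but `f(s)` cancels.
At `s = 0`, `|t| I_a f(t) = (1-t²)^a f(t) + 2a (t F(t) + L|t|) → f(0)`. -/

open Set

lemma one_sub_sq_pos_of_mem_Ioo {t : ℝ} (ht : t ∈ Ioo (-1:ℝ) 1) : 0 < 1 - t ^ 2 := by
  nlinarith [ht.1, ht.2]

lemma Real.sign_mul_abs (t : ℝ) : Real.sign t * |t| = t := by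
  rcases lt_trichotomy t 0 with h | rfl | h
  · rw [Real.sign_of_neg h, abs_of_neg h, neg_one_mul, neg_neg]
  · simp
  · rw [Real.sign_of_pos h, abs_of_pos h, one_mul]

lemma Real.mul_abs_inv_eq_sign {t : ℝ} (ht : t ≠ 0) : t * |t|⁻¹ = Real.sign t := by
  nth_rw 1 [← Real.sign_mul_abs t]
  rw [mul_assoc, mul_inv_cancel₀ (abs_ne_zero.2 ht), mul_one]

lemma Real.sign_eq_of_mem_uIoc {s t : ℝ} (ht : t ∈ uIoc 0 s) (ht0 : t ≠ 0) :
    Real.sign t = Real.sign s := by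
  rcases mem_uIoc.1 ht with ⟨h0t, hts⟩ | ⟨hst, ht0'⟩
  · rw [Real.sign_of_pos h0t, Real.sign_of_pos (h0t.trans_le hts)]
  · have htneg := lt_of_le_of_ne ht0' ht0
    rw [Real.sign_of_neg htneg, Real.sign_of_neg (hst.trans htneg)]

section

variable {a : ℝ} {f : ℝ → ℝ}

lemma continuousOn_one_sub_sq_rpow (p : ℝ) :
    ContinuousOn (fun t : ℝ => (1 - t ^ 2) ^ p) (Ioo (-1:ℝ) 1) :=
  ContinuousOn.rpow_const (by fun_prop) fun _ ht => Or.inl (one_sub_sq_pos_of_mem_Ioo ht).ne'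

lemma hasDerivAt_daInt (hf : ContinuousOn f (Ioo (-1:ℝ) 1)) {t : ℝ} (ht : t ∈ Ioo (-1:ℝ) 1) :
    HasDerivAt (DaInt a f) ((1 - t ^ 2) ^ (a - 1) * f t) t := by
  have hg : ContinuousOn (fun t : ℝ => (1 - t ^ 2) ^ (a - 1) * f t) (Ioo (-1:ℝ) 1) :=
    (continuousOn_one_sub_sq_rpow _).mul hf
  exact intervalIntegral.integral_hasDerivAt_right
    (hg.mono (ordConnected_Ioo.uIcc_subset (by norm_num) ht)).intervalIntegrable
    (hg.stronglyMeasurableAtFilter isOpen_Ioo t ht) (hg.continuousAt (isOpen_Ioo.mem_nhds ht))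

lemma continuousOn_daInt (hf : ContinuousOn f (Ioo (-1:ℝ) 1)) :
    ContinuousOn (DaInt a f) (Ioo (-1:ℝ) 1) :=
  fun _ ht => (hasDerivAt_daInt hf ht).continuousAt.continuousWithinAt

lemma daInt_neg (heven : ∀ s ∈ Ioo (-1:ℝ) 1, f (-s) = f s) {s : ℝ} (hs : s ∈ Ioo (-1:ℝ) 1) :
    DaInt a f (-s) = -DaInt a f s := by
  have hodd : EqOn (fun t : ℝ => (1 - (-t) ^ 2) ^ (a - 1) * f (-t))
      (fun t : ℝ => (1 - t ^ 2) ^ (a - 1) * f t) (uIcc 0 s) := fun t ht => by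
    dsimp only
    rw [neg_sq, heven t (ordConnected_Ioo.uIcc_subset (by norm_num) hs ht)]
  have := intervalIntegral.integral_comp_neg (a := 0) (b := s)
    (fun t : ℝ => (1 - t ^ 2) ^ (a - 1) * f t)
  rw [neg_zero, intervalIntegral.integral_congr hodd] at this
  rw [DaInt, DaInt, intervalIntegral.integral_symm, this]

lemma tendsto_daInt_neg_one (heven : ∀ s ∈ Ioo (-1:ℝ) 1, f (-s) = f s) {L : ℝ}
    (hL : Tendsto (DaInt a f) (𝓝[Ioo (-1:ℝ) 1] 1) (𝓝 L)) :
    Tendsto (DaInt a f) (𝓝[Ioo (-1:ℝ) 1] (-1)) (𝓝 (-L)) := by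
  have hneg : Tendsto Neg.neg (𝓝[Ioo (-1:ℝ) 1] (-1)) (𝓝[Ioo (-1:ℝ) 1] 1) := by
    have hmaps : MapsTo Neg.neg (Ioo (-1:ℝ) 1) (Ioo (-1:ℝ) 1) := fun x hx =>
      ⟨by linarith [hx.2], by linarith [hx.1]⟩
    simpa using (continuous_neg.continuousWithinAt (x := (-1:ℝ))).tendsto_nhdsWithin hmaps
  refine (hL.comp hneg).neg.congr' ?_
  filter_upwards [self_mem_nhdsWithin] with x hx
  rw [Function.comp_apply, daInt_neg heven hx, neg_neg]

lemma daIntE_eq_of_tendsto {e L : ℝ} (he : e ∈ frontier (Ioo (-1:ℝ) 1))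
    (hL : Tendsto (DaInt a f) (𝓝[Ioo (-1:ℝ) 1] e) (𝓝 L)) : DaIntE a f e = L := by
  have : (𝓝[Ioo (-1:ℝ) 1] e).NeBot :=
    mem_closure_iff_nhdsWithin_neBot.1 (frontier_subset_closure he)
  rw [isOpen_Ioo.frontier_eq] at he
  rw [DaIntE, if_neg he.2, DaLim, hL.limUnder_eq]

lemma Ia_eq_of_mem_Ioo {L : ℝ} (h1 : DaIntE a f 1 = L) (hm1 : DaIntE a f (-1) = -L) {t : ℝ}
    (ht : t ∈ Ioo (-1:ℝ) 1) (ht0 : t ≠ 0) :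
    Ia a f t = |t|⁻¹ * (1 - t ^ 2) ^ a * f t + 2 * a * (Real.sign t * DaInt a f t + L) := by
  have hE : DaIntE a f t = DaInt a f t := if_pos ht
  rcases ht0.lt_or_gt with h | h
  · rw [Ia, Real.sign_of_neg h, neg_neg, h1, hE, abs_of_neg h]
    ring
  · rw [Ia, Real.sign_of_pos h, hm1, hE, abs_of_pos h]
    ring

lemma Ia_one (ha : a ≠ 0) : Ia a f 1 = 2 * a * (DaIntE a f 1 - DaIntE a f (-1)) := by
  rw [Ia, Real.sign_one, one_pow, sub_self, Real.zero_rpow ha]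
  ring

lemma tendsto_abs_mul_Ia (hf : ContinuousOn f (Ioo (-1:ℝ) 1)) {L : ℝ} (h1 : DaIntE a f 1 = L)
    (hm1 : DaIntE a f (-1) = -L) :
    Tendsto (fun t => |t| * Ia a f t) (𝓝[≠] 0) (𝓝 (f 0)) := by
  have h0 : (0:ℝ) ∈ Ioo (-1:ℝ) 1 := by norm_num
  have hcont : ContinuousAt
      (fun t : ℝ => (1 - t ^ 2) ^ a * f t + 2 * a * (t * DaInt a f t + L * |t|)) 0 :=
    (((continuousOn_one_sub_sq_rpow a).mul hf).continuousAt (isOpen_Ioo.mem_nhds h0)).add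
      (continuousAt_const.mul ((continuousAt_id.mul ((continuousOn_daInt hf).continuousAt
        (isOpen_Ioo.mem_nhds h0))).add (continuousAt_const.mul continuous_abs.continuousAt)))
  have hlim := hcont.tendsto.mono_left (nhdsWithin_le_nhds (s := {0}ᶜ))
  simp only [ne_eq, OfNat.ofNat_ne_zero, not_false_eq_true, zero_pow, sub_zero, Real.one_rpow,
    one_mul, zero_mul, abs_zero, mul_zero, add_zero] at hlim
  refine hlim.congr' ?_
  filter_upwards [nhdsWithin_le_nhds (isOpen_Ioo.mem_nhds h0), self_mem_nhdsWithin]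
    with t ht ht0
  rw [Ia_eq_of_mem_Ioo h1 hm1 ht ht0]
  linear_combination -((1 - t ^ 2) ^ a * f t) * mul_inv_cancel₀ (abs_ne_zero.2 ht0)
    - 2 * a * DaInt a f t * Real.sign_mul_abs t

lemma hasDerivAt_one_sub_sq_rpow_neg_mul (hf : ContinuousOn f (Ioo (-1:ℝ) 1)) (c L : ℝ) {t : ℝ}
    (ht : t ∈ Ioo (-1:ℝ) 1) :
    HasDerivAt (fun t => (1 - t ^ 2) ^ (-a) * (c * DaInt a f t + L))
      ((1 - t ^ 2) ^ (-(a + 1)) * (c * (1 - t ^ 2) ^ a * f t + 2 * a * t * (c * DaInt a f t + L)))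
      t := by
  have hx := one_sub_sq_pos_of_mem_Ioo ht
  have hbase : HasDerivAt (fun t : ℝ => 1 - t ^ 2) (-(2 * t)) t := by
    simpa using (hasDerivAt_pow 2 t).const_sub 1
  have hprod := (hbase.rpow_const (p := -a) (Or.inl hx.ne')).mul
    (((hasDerivAt_daInt (a := a) hf ht).const_mul c).add_const L)
  have hexp : (1 - t ^ 2) ^ (-a) * (1 - t ^ 2) ^ (a - 1)
      = (1 - t ^ 2) ^ (-(a + 1)) * (1 - t ^ 2) ^ a := by
    rw [← Real.rpow_add hx, ← Real.rpow_add hx]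
    ring_nf
  rw [show -(a + 1) = -a - 1 by ring] at hexp ⊢
  refine hprod.congr_deriv ?_
  linear_combination c * f t * hexp

lemma integral_one_sub_sq_rpow_mul (hf : ContinuousOn f (Ioo (-1:ℝ) 1)) (c L : ℝ) {s : ℝ}
    (hs : s ∈ Ioo (-1:ℝ) 1) :
    ∫ t in (0:ℝ)..s,
        (1 - t ^ 2) ^ (-(a + 1)) * (c * (1 - t ^ 2) ^ a * f t + 2 * a * t * (c * DaInt a f t + L))
      = (1 - s ^ 2) ^ (-a) * (c * DaInt a f s + L) - L := by
  have hsub : uIcc 0 s ⊆ Ioo (-1:ℝ) 1 := ordConnected_Ioo.uIcc_subset (by norm_num) hs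
  have hcont : ContinuousOn (fun t : ℝ =>
      (1 - t ^ 2) ^ (-(a + 1)) * (c * (1 - t ^ 2) ^ a * f t + 2 * a * t * (c * DaInt a f t + L)))
      (Ioo (-1:ℝ) 1) := by
    have := continuousOn_daInt (a := a) hf
    have := continuousOn_one_sub_sq_rpow (-(a + 1))
    have := continuousOn_one_sub_sq_rpow a
    fun_prop
  rw [intervalIntegral.integral_eq_sub_of_hasDerivAt
    (fun t ht => hasDerivAt_one_sub_sq_rpow_neg_mul hf c L (hsub ht))
    ((hcont.mono hsub).intervalIntegrable)]
  simp [DaInt]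

lemma integral_mul_Ia {L : ℝ} (hf : ContinuousOn f (Ioo (-1:ℝ) 1)) (h1 : DaIntE a f 1 = L)
    (hm1 : DaIntE a f (-1) = -L) {s : ℝ} (hs : s ∈ Ioo (-1:ℝ) 1) :
    ∫ t in (0:ℝ)..s, t * (1 - t ^ 2) ^ (-(a + 1)) * Ia a f t
      = (1 - s ^ 2) ^ (-a) * (Real.sign s * DaInt a f s + L) - L := by
  rw [← integral_one_sub_sq_rpow_mul hf _ _ hs]
  refine intervalIntegral.integral_congr_ae ?_
  filter_upwards [Measure.ae_ne volume 0] with t ht0 ht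
  have htI : t ∈ Ioo (-1:ℝ) 1 :=
    ordConnected_Ioo.uIcc_subset (by norm_num) hs (uIoc_subset_uIcc ht)
  rw [Ia_eq_of_mem_Ioo h1 hm1 htI ht0, ← Real.sign_eq_of_mem_uIoc ht ht0]
  linear_combination (1 - t ^ 2) ^ (-(a + 1)) * (1 - t ^ 2) ^ a * f t
    * Real.mul_abs_inv_eq_sign ht0

end

/-- For even `f ∈ D^a`, `J_a(I_a(f)) = f` on `(-1,1)`. -/
theorem Ja_Ia_even (a : ℝ) (ha : 0 < a) (f : ℝ → ℝ) (hf : MemDa a f)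
    (heven : ∀ s ∈ Set.Ioo (-1:ℝ) 1, f (-s) = f s) :
    ∀ s ∈ Set.Ioo (-1:ℝ) 1, Ja a (Ia a f) s = f s := by
  obtain ⟨hfc, -, -, ⟨L, hL⟩, -⟩ := hf
  have h1 : DaIntE a f 1 = L := daIntE_eq_of_tendsto (by simp [frontier_Ioo]) hL
  have hm1 : DaIntE a f (-1) = -L :=
    daIntE_eq_of_tendsto (by simp [frontier_Ioo]) (tendsto_daInt_neg_one heven hL)
  intro s hs
  rcases eq_or_ne s 0 with rfl | hs0
  · rw [Ja, if_pos rfl, (tendsto_abs_mul_Ia hfc h1 hm1).limUnder_eq]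
  · have hx := one_sub_sq_pos_of_mem_Ioo hs
    rw [Ja, if_neg hs0, integral_mul_Ia hfc h1 hm1 hs, Ia_one ha.ne', h1, hm1,
      Ia_eq_of_mem_Ioo h1 hm1 hs hs0]
    have hpow : (1 - s ^ 2) ^ (-a) * (1 - s ^ 2) ^ a = 1 := by
      rw [← Real.rpow_add hx, neg_add_cancel, Real.rpow_zero]
    linear_combination f s * hpow
      + (1 - s ^ 2) ^ (-a) * (1 - s ^ 2) ^ a * f s * mul_inv_cancel₀ (abs_ne_zero.2 hs0)
end

section
/- Let a > 0 and let f ∈ D^a be an odd function. Then for all s ∈ (-1,1), J_a(I_a(f))(s) = f(s) - s · 2a ∫₀¹ f(t)(1-t²)^{a-1} dt, i.e., J_a ∘ I_a(f) differs from f by a linear function. -/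
open Filter Topology MeasureTheory

/-- For odd `f ∈ D^a`, `J_a(I_a(f))(s) = f(s) - s·2a·∫₀¹ f(t)(1-t²)^{a-1} dt` on `(-1,1)`,
i.e. `J_a ∘ I_a (f)` differs from `f` by a linear function. Here the improper integral
`∫₀¹ f(t)(1-t²)^{a-1} dt` is `DaLim a f 1`. -/
theorem Ja_Ia_odd (a : ℝ) (ha : 0 < a) (f : ℝ → ℝ) (hf : MemDa a f)
    (hodd : ∀ s ∈ Set.Ioo (-1:ℝ) 1, f (-s) = -f s) :
    ∀ s ∈ Set.Ioo (-1:ℝ) 1, Ja a (Ia a f) s = f s - s * (2 * a) * DaLim a f 1 := by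
  obtain ⟨hcont, -, -, ⟨L, hL⟩, -⟩ := hf
  have hne : ((-1:ℝ)) ≠ 1 := by norm_num
  haveI hnb1 : (𝓝[Set.Ioo (-1:ℝ) 1] (1:ℝ)).NeBot := by
    refine mem_closure_iff_nhdsWithin_neBot.mp ?_
    rw [closure_Ioo hne]
    exact ⟨by norm_num, le_refl 1⟩
  haveI hnbm : (𝓝[Set.Ioo (-1:ℝ) 1] (-1:ℝ)).NeBot := by
    refine mem_closure_iff_nhdsWithin_neBot.mp ?_
    rw [closure_Ioo hne]
    exact ⟨le_refl _, by norm_num⟩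
  have hpos : ∀ t ∈ Set.Ioo (-1:ℝ) 1, 0 < 1 - t ^ 2 := fun t ht => by nlinarith [ht.1, ht.2]
  have hsub : ∀ x ∈ Set.Ioo (-1:ℝ) 1, Set.uIcc (0:ℝ) x ⊆ Set.Ioo (-1:ℝ) 1 := fun x hx =>
    Set.ordConnected_Ioo.uIcc_subset (by norm_num) hx
  -- F is even
  have hF_even : ∀ x ∈ Set.Ioo (-1:ℝ) 1, DaInt a f (-x) = DaInt a f x := by
    intro x hx
    have hsx := hsub x hx
    calc DaInt a f (-x)
        = -∫ t in (-x:ℝ)..0, (1 - t ^ 2) ^ (a - 1) * f t := by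
          rw [DaInt, ← intervalIntegral.integral_symm]
      _ = -∫ t in (0:ℝ)..x, (1 - (-t) ^ 2) ^ (a - 1) * f (-t) := by
          rw [intervalIntegral.integral_comp_neg
            (f := fun t => (1 - t ^ 2) ^ (a - 1) * f t)]
          norm_num
      _ = -∫ t in (0:ℝ)..x, -((1 - t ^ 2) ^ (a - 1) * f t) := by
          congr 1
          apply intervalIntegral.integral_congr
          intro t ht
          have h := hodd t (hsx ht)
          simp only [neg_sq, h, mul_neg]
      _ = DaInt a f x := by rw [intervalIntegral.integral_neg, neg_neg]; rfl
  have hmap : Tendsto (fun x : ℝ => -x) (𝓝[Set.Ioo (-1:ℝ) 1] (-1)) (𝓝[Set.Ioo (-1:ℝ) 1] 1) := by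
    have hmaps : Set.MapsTo (fun x : ℝ => -x) (Set.Ioo (-1:ℝ) 1) (Set.Ioo (-1:ℝ) 1) := by
      intro y hy
      simp only [Set.mem_Ioo] at hy ⊢
      constructor <;> linarith [hy.1, hy.2]
    simpa using (continuous_neg.continuousWithinAt
      (s := Set.Ioo (-1:ℝ) 1) (x := (-1:ℝ))).tendsto_nhdsWithin hmaps
  have hFm : Tendsto (DaInt a f) (𝓝[Set.Ioo (-1:ℝ) 1] (-1)) (𝓝 L) := by
    have h1 : Tendsto (fun x => DaInt a f (-x)) (𝓝[Set.Ioo (-1:ℝ) 1] (-1)) (𝓝 L) := hL.comp hmap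
    exact h1.congr' (by filter_upwards [self_mem_nhdsWithin] with x hx using hF_even x hx)
  have hL1 : DaLim a f 1 = L := by rw [DaLim]; exact hL.limUnder_eq
  have hLm : DaLim a f (-1) = L := by rw [DaLim]; exact hFm.limUnder_eq
  -- continuity of the integrand
  have hg : ContinuousOn (fun t : ℝ => (1 - t ^ 2) ^ (a - 1) * f t) (Set.Ioo (-1:ℝ) 1) := by
    refine ContinuousOn.mul ?_ hcont
    exact ContinuousOn.rpow_const (by fun_prop) (fun t ht => Or.inl (hpos t ht).ne')
  have hFderiv : ∀ t ∈ Set.Ioo (-1:ℝ) 1,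
      HasDerivAt (DaInt a f) ((1 - t ^ 2) ^ (a - 1) * f t) t := by
    intro t ht
    have := intervalIntegral.integral_hasDerivAt_right
      (f := fun t : ℝ => (1 - t ^ 2) ^ (a - 1) * f t) (a := 0) (b := t)
      ((hg.mono (hsub t ht)).intervalIntegrable)
      (ContinuousOn.stronglyMeasurableAtFilter isOpen_Ioo hg t ht)
      (hg.continuousAt (isOpen_Ioo.mem_nhds ht))
    exact this
  have hFcont : ContinuousOn (DaInt a f) (Set.Ioo (-1:ℝ) 1) :=
    fun t ht => ((hFderiv t ht).continuousAt).continuousWithinAt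
  have hf0 : f 0 = 0 := by
    have h := hodd 0 (by norm_num)
    rw [neg_zero] at h
    linarith
  -- value of Ia on (-1,1)
  have hu : ∀ x ∈ Set.Ioo (-1:ℝ) 1, x ≠ 0 →
      Ia a f x = Real.sign x *
        (x⁻¹ * (1 - x ^ 2) ^ a * f x + 2 * a * (DaInt a f x - L)) := by
    intro x hx hx0
    rw [Ia, DaIntE, if_pos hx]
    rcases hx0.lt_or_gt with h | h
    · rw [Real.sign_of_neg h, neg_neg, DaIntE, if_neg (by simp), hL1]
    · rw [Real.sign_of_pos h, DaIntE, if_neg (by simp), hLm]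
  have hu1 : Ia a f 1 = 0 := by
    rw [Ia, Real.sign_one, DaIntE, if_neg (by simp), DaIntE, if_neg (by simp), hL1, hLm]
    norm_num [Real.zero_rpow ha.ne']
  -- derivative of H t = (1-t^2)^(-a) * (F t - L)
  have hH : ∀ t ∈ Set.Ioo (-1:ℝ) 1,
      HasDerivAt (fun t : ℝ => (1 - t ^ 2) ^ (-a) * (DaInt a f t - L))
        (2 * a * t * (1 - t ^ 2) ^ (-(a + 1)) * (DaInt a f t - L) + (1 - t ^ 2)⁻¹ * f t) t := by
    intro t ht
    have hp := hpos t ht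
    have h1 : HasDerivAt (fun t : ℝ => 1 - t ^ 2) (-(2 * t)) t := by
      simpa using (hasDerivAt_pow 2 t).const_sub 1
    have h2 := h1.rpow_const (p := -a) (Or.inl hp.ne')
    have h4 := h2.mul ((hFderiv t ht).sub_const L)
    refine h4.congr_deriv ?_
    rw [show (-a - 1 : ℝ) = -(a + 1) by ring]
    have e2 : (1 - t ^ 2 : ℝ) ^ (-a) * (1 - t ^ 2) ^ (a - 1) = (1 - t ^ 2)⁻¹ := by
      rw [← Real.rpow_add hp, show (-a + (a - 1) : ℝ) = -1 by ring, Real.rpow_neg_one]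
    rw [← e2]
    ring
  intro s hs
  rw [hL1]
  by_cases hs0 : s = 0
  · subst hs0
    rw [Ja, if_pos rfl]
    have h0mem : (0:ℝ) ∈ Set.Ioo (-1:ℝ) 1 := by norm_num
    have c1 : ContinuousAt (fun t : ℝ => (1 - t ^ 2) ^ a) 0 :=
      ContinuousAt.rpow_const (by fun_prop) (Or.inr ha.le)
    have c2 : ContinuousAt f 0 := hcont.continuousAt (isOpen_Ioo.mem_nhds h0mem)
    have c3 : ContinuousAt (DaInt a f) 0 := (hFderiv 0 h0mem).continuousAt
    have hψ : ContinuousAt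
        (fun t : ℝ => (1 - t ^ 2) ^ a * f t + 2 * a * t * (DaInt a f t - L)) 0 :=
      (c1.mul c2).add ((by fun_prop : ContinuousAt (fun t : ℝ => 2 * a * t) 0).mul
        (c3.sub continuousAt_const))
    have hψ0 : (fun t : ℝ => (1 - t ^ 2) ^ a * f t + 2 * a * t * (DaInt a f t - L)) 0 = 0 := by
      norm_num [hf0]
    have hten : Tendsto (fun t : ℝ => |t| * Ia a f t) (𝓝[≠] (0:ℝ)) (𝓝 0) := by
      have h0ten : Tendsto (fun t : ℝ => (1 - t ^ 2) ^ a * f t + 2 * a * t * (DaInt a f t - L))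
          (𝓝[≠] (0:ℝ)) (𝓝 0) := by
        simpa [hf0] using hψ.tendsto.mono_left nhdsWithin_le_nhds
      refine h0ten.congr' ?_
      · filter_upwards [self_mem_nhdsWithin,
          mem_nhdsWithin_of_mem_nhds (isOpen_Ioo.mem_nhds h0mem)] with t ht0 htI
        have ht0' : t ≠ 0 := ht0
        rw [hu t htI ht0']
        have h1 : t * t⁻¹ = 1 := mul_inv_cancel₀ ht0'
        rcases ht0'.lt_or_gt with h | h
        · rw [abs_of_neg h, Real.sign_of_neg h]
          linear_combination (-((1 - t ^ 2) ^ a * f t)) * h1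
        · rw [abs_of_pos h, Real.sign_of_pos h]
          linear_combination (-((1 - t ^ 2) ^ a * f t)) * h1
    rw [hten.limUnder_eq]
    simp [hf0]
  · -- s ≠ 0
    have hssub := hsub s hs
    have hHderivOn : ∀ t ∈ Set.uIcc (0:ℝ) s,
        HasDerivAt (fun t : ℝ => (1 - t ^ 2) ^ (-a) * (DaInt a f t - L))
          (2 * a * t * (1 - t ^ 2) ^ (-(a + 1)) * (DaInt a f t - L) + (1 - t ^ 2)⁻¹ * f t) t :=
      fun t ht => hH t (hssub ht)
    have hφcont : ContinuousOn
        (fun t : ℝ => 2 * a * t * (1 - t ^ 2) ^ (-(a + 1)) * (DaInt a f t - L)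
          + (1 - t ^ 2)⁻¹ * f t) (Set.Ioo (-1:ℝ) 1) := by
      apply ContinuousOn.add
      · exact (ContinuousOn.mul (by fun_prop)
          (ContinuousOn.rpow_const (by fun_prop) (fun t ht => Or.inl (hpos t ht).ne'))).mul
          (hFcont.sub continuousOn_const)
      · exact (ContinuousOn.inv₀ (by fun_prop) (fun t ht => (hpos t ht).ne')).mul hcont
    have hφint : IntervalIntegrable
        (fun t : ℝ => 2 * a * t * (1 - t ^ 2) ^ (-(a + 1)) * (DaInt a f t - L)
          + (1 - t ^ 2)⁻¹ * f t) MeasureTheory.volume 0 s :=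
      (hφcont.mono hssub).intervalIntegrable
    have hFTC := intervalIntegral.integral_eq_sub_of_hasDerivAt hHderivOn hφint
    have hF0 : DaInt a f 0 = 0 := by
      rw [DaInt]
      exact intervalIntegral.integral_same
    have hIcongr : Set.EqOn (fun t : ℝ => t * (1 - t ^ 2) ^ (-(a + 1)) * Ia a f t)
        (fun t : ℝ => Real.sign s * (2 * a * t * (1 - t ^ 2) ^ (-(a + 1)) * (DaInt a f t - L)
          + (1 - t ^ 2)⁻¹ * f t)) (Set.uIcc (0:ℝ) s) := by
      intro t ht
      by_cases ht0 : t = 0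
      · subst ht0
        simp [Ia, hf0]
      · have htI : t ∈ Set.Ioo (-1:ℝ) 1 := hssub ht
        have hsgn_eq : Real.sign t = Real.sign s := by
          rcases lt_or_gt_of_ne hs0 with h | h
          · have ht' : t ≤ 0 := by
              rcases Set.mem_uIcc.mp ht with ⟨h1, h2⟩ | ⟨h1, h2⟩ <;> linarith
            rw [Real.sign_of_neg (ht'.lt_of_ne ht0), Real.sign_of_neg h]
          · have ht' : 0 ≤ t := by
              rcases Set.mem_uIcc.mp ht with ⟨h1, h2⟩ | ⟨h1, h2⟩ <;> linarith
            rw [Real.sign_of_pos (ht'.lt_of_ne' ht0), Real.sign_of_pos h]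
        simp only
        rw [hu t htI ht0, hsgn_eq]
        have hp := hpos t htI
        have e2 : (1 - t ^ 2 : ℝ) ^ (-(a + 1)) * (1 - t ^ 2) ^ a = (1 - t ^ 2)⁻¹ := by
          rw [← Real.rpow_add hp, show (-(a + 1) + a : ℝ) = -1 by ring, Real.rpow_neg_one]
        have h1 : t * t⁻¹ = 1 := mul_inv_cancel₀ ht0
        linear_combination (Real.sign s * f t * (1 - t ^ 2) ^ (-(a + 1)) * (1 - t ^ 2) ^ a) * h1
          + (Real.sign s * f t) * e2
    have hIeq : (∫ t in (0:ℝ)..s, t * (1 - t ^ 2) ^ (-(a + 1)) * Ia a f t)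
        = Real.sign s * ((1 - s ^ 2) ^ (-a) * (DaInt a f s - L) + L) := by
      rw [intervalIntegral.integral_congr hIcongr, intervalIntegral.integral_const_mul, hFTC]
      norm_num [hF0]
    rw [Ja, if_neg hs0, hu1, hu s hs hs0, hIeq]
    have hs1 : s * s⁻¹ = 1 := mul_inv_cancel₀ hs0
    have hBC : (1 - s ^ 2 : ℝ) ^ (-a) * (1 - s ^ 2) ^ a = 1 := by
      rw [← Real.rpow_add (hpos s hs), show (-a + a : ℝ) = 0 by ring, Real.rpow_zero]
    rcases lt_or_gt_of_ne hs0 with h | h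
    · rw [Real.sign_of_neg h, abs_of_neg h]
      linear_combination (f s * (1 - s ^ 2) ^ (-a) * (1 - s ^ 2) ^ a) * hs1 + f s * hBC
    · rw [Real.sign_of_pos h, abs_of_pos h]
      linear_combination (f s * (1 - s ^ 2) ^ (-a) * (1 - s ^ 2) ^ a) * hs1 + f s * hBC
end
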